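/- arXiv:0901.3441 — 3 statements merged into one kernel-verified Lean document; each statement's English description precedes it below -/
import Mathlib

section
/- If G is a finite QSI group and N is a normal subgroup of G, then the quotient group G/N is also QSI. -/
/-!
Inflate `χ ∈ Irr(G/N)` to `G` and write `k • χ = φ^G` with `φ ∈ Irr(U)` afforded by `W`.
Since `N` lies in the kernel of `φ^G` and is normal, summing `φ^G` over `N` and comparing with
`φ^G(1)` gives `|N| · φ(1) = |N ∩ U| · dim W^(N ∩ U)`, which forces `N ≤ U` and `N` to act
trivially on `W`. Hence `φ` is inflated from a character `φ̄` of `U/N`, irreducible by the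
criterion `∑ χ(g) χ(g⁻¹) = |G|`; moreover `φ̄^(G/N)` inflates to `φ^G`, and `(U/N)/ker φ̄` is a
quotient of `U/ker φ`.
-/

open scoped BigOperators Classical

noncomputable section

/-- `χ` is the character of some finite-dimensional complex representation of `G`. -/
def IsCharacter (G : Type) [Monoid G] (χ : G → ℂ) : Prop :=
  ∃ V : FDRep ℂ G, χ = V.character

/-- `χ` is an irreducible complex character of `G`, i.e. the character of a simple
finite-dimensional complex representation of `G`. -/
def IsIrreducibleCharacter (G : Type) [Monoid G] (χ : G → ℂ) : Prop :=
  ∃ V : FDRep ℂ G, CategoryTheory.Simple V ∧ χ = V.character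

/-- The class function of `G` induced from the function `φ` on the subgroup `U`:
`φ^G(g) = |U|⁻¹ · ∑_{y ∈ G, y⁻¹gy ∈ U} φ(y⁻¹gy)`. -/
def inducedChar {G : Type} [Group G] [Finite G] (U : Subgroup G) (φ : ↥U → ℂ) : G → ℂ :=
  fun g => (Nat.card ↥U : ℂ)⁻¹ *
    ∑ᶠ y : G, if h : y⁻¹ * g * y ∈ U then φ ⟨y⁻¹ * g * y, h⟩ else 0

/-- `χ` is quasi solvably induced (QSI) from the subgroup `U` and `φ ∈ Irr(U)`:
there is `k ≥ 1` with `k·χ = φ^G`, and `U/ker(φ)` is solvable, where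
`ker(φ) = {u ∈ U | φ(u) = φ(1)}`. -/
def IsQSIFrom {G : Type} [Group G] [Finite G] (χ : G → ℂ) (U : Subgroup G)
    (φ : ↥U → ℂ) : Prop :=
  IsIrreducibleCharacter ↥U φ ∧
  (∃ k : ℕ, 0 < k ∧ ∀ g : G, (k : ℂ) * χ g = inducedChar U φ g) ∧
  ∃ (K : Subgroup ↥U) (hK : K.Normal), (K : Set ↥U) = {u : ↥U | φ u = φ 1} ∧
    (letI := hK; IsSolvable (↥U ⧸ K))

/-- `χ` is QSI from some subgroup `U ≤ G` and some `φ ∈ Irr(U)`. -/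
def IsQSI {G : Type} [Group G] [Finite G] (χ : G → ℂ) : Prop :=
  ∃ (U : Subgroup G) (φ : ↥U → ℂ), IsQSIFrom χ U φ

/-- A finite group `G` is QSI if every irreducible complex character of `G` is QSI. -/
def IsQSIGroup (G : Type) [Group G] [Finite G] : Prop :=
  ∀ χ : G → ℂ, IsIrreducibleCharacter G χ → IsQSI χ

/-- The usual inner product of class functions on a finite group. -/
def charInner {H : Type} [Group H] [Finite H] (α β : H → ℂ) : ℂ :=
  (Nat.card H : ℂ)⁻¹ * ∑ᶠ h : H, α h * starRingEnd ℂ (β h)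


open CategoryTheory

theorem MonoidHom.sum_comp_of_surjective {A B M : Type*} [Group A] [Fintype A] [Group B]
    [Fintype B] [AddCommMonoid M] (p : A →* B) (hp : Function.Surjective p) (F : B → M) :
    ∑ a, F (p a) = Nat.card p.ker • ∑ b, F b := by
  rw [Finset.sum_comp, Finset.image_univ_of_surjective hp, Finset.smul_sum]
  refine Finset.sum_congr rfl fun b _ => ?_
  rw [MonoidHom.card_fiber_eq_of_mem_range p (hp b) ⟨1, map_one p⟩, Nat.card_eq_fintype_card,
    Fintype.card_subtype]
  simp only [MonoidHom.mem_ker]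

theorem MonoidHom.card_eq_card_ker_mul_card_of_surjective {A B : Type*} [Group A] [Fintype A]
    [Group B] [Fintype B] (p : A →* B) (hp : Function.Surjective p) :
    Nat.card A = Nat.card p.ker * Nat.card B := by
  have h := p.sum_comp_of_surjective hp (fun _ => 1)
  simpa only [Finset.sum_const, Finset.card_univ, smul_eq_mul, mul_one,
    ← Nat.card_eq_fintype_card] using h

theorem Subgroup.card_subgroupOf {G : Type} [Group G] (N U : Subgroup G) :
    Nat.card (N.subgroupOf U) = Nat.card ↥(N ⊓ U) := by
  rw [← Subgroup.subgroupOf_map_subtype, Subgroup.card_map_of_injective U.subtype_injective]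

theorem Subgroup.card_eq_card_map_mul_card_ker {G H : Type} [Group G] [Group H] (f : G →* H)
    {U : Subgroup G} [Fintype U] [Fintype (U.map f)] (hU : f.ker ≤ U) :
    Nat.card U = Nat.card (U.map f) * Nat.card f.ker := by
  rw [(f.subgroupMap U).card_eq_card_ker_mul_card_of_surjective (f.subgroupMap_surjective U),
    Subgroup.ker_subgroupMap, Nat.card_congr (Subgroup.subgroupOfEquivOfLe hU).toEquiv, mul_comm]

theorem FDRep.nontrivial_of_simple {k A : Type} [Field k] [Monoid A] (X : FDRep k A)
    [Simple X] : Nontrivial X := by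
  by_contra hX
  rw [not_nontrivial_iff_subsingleton] at hX
  refine id_nonzero X (Action.Hom.ext ?_)
  ext v
  exact Subsingleton.elim _ _

theorem FDRep.sum_character_eq_card_mul_finrank_invariants {k A : Type} [Field k] [CharZero k]
    [Group A] [Fintype A] (X : FDRep k A) :
    ∑ a, X.character a = Nat.card A * Module.finrank k (Representation.invariants X.ρ) := by
  have hA : (Nat.card A : k) ≠ 0 := Nat.cast_ne_zero.mpr Nat.card_pos.ne'
  have : Invertible (Nat.card A : k) := invertibleOfNonzero hA
  rw [← FDRep.average_char_eq_finrank_invariants, mul_inv_cancel_left₀ hA]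

theorem FDRep.simple_iff_of_character_eq_comp {k A B : Type} [Field k] [IsAlgClosed k]
    [CharZero k] [Group A] [Fintype A] [Group B] [Fintype B] (p : A →* B)
    (hp : Function.Surjective p) {X : FDRep k A} {Y : FDRep k B}
    (h : ∀ a, X.character a = Y.character (p a)) : Simple X ↔ Simple Y := by
  have hker : (Nat.card p.ker : k) ≠ 0 := Nat.cast_ne_zero.mpr Nat.card_pos.ne'
  rw [FDRep.simple_iff_char_is_norm_one, FDRep.simple_iff_char_is_norm_one,
    p.card_eq_card_ker_mul_card_of_surjective hp, Nat.cast_mul]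
  simp only [h, map_inv]
  rw [p.sum_comp_of_surjective hp (fun b => Y.character b * Y.character b⁻¹), nsmul_eq_mul,
    mul_right_inj' hker]

theorem FDRep.exists_character_eq_comp {k A B : Type} [Field k] [Group A] [Group B]
    (p : A →* B) (hp : Function.Surjective p) (X : FDRep k A) (h : p.ker ≤ X.ρ.ker) :
    ∃ Y : FDRep k B, ∀ a, X.character a = Y.character (p a) := by
  let e := QuotientGroup.quotientKerEquivOfSurjective p hp
  refine ⟨FDRep.of ((QuotientGroup.lift p.ker X.ρ h).comp e.symm.toMonoidHom), fun a => ?_⟩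
  have he : e.symm (p a) = a := e.symm_apply_eq.mpr rfl
  simp [FDRep.character, he]

-- The solvability clause of `IsQSIFrom`.
def HasSolvableKerQuotient {A : Type} [Group A] (φ : A → ℂ) : Prop :=
  ∃ (K : Subgroup A) (hK : K.Normal), (K : Set A) = {a | φ a = φ 1} ∧
    (letI := hK; Group.IsSolvable (A ⧸ K))

theorem HasSolvableKerQuotient.of_comp {A B : Type} [Group A] [Group B] {p : A →* B}
    (hp : Function.Surjective p) {ψ : B → ℂ} (h : HasSolvableKerQuotient (ψ ∘ p)) :
    HasSolvableKerQuotient ψ := by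
  obtain ⟨K, hK, hKψ, hsolv⟩ := h
  have hmem : ∀ a, a ∈ K ↔ ψ (p a) = ψ 1 := fun a => by
    rw [← SetLike.mem_coe, hKψ]
    simp
  refine ⟨K.map p, hK.map p hp, Set.ext fun b => ?_, ?_⟩
  · obtain ⟨a, rfl⟩ := hp b
    refine ⟨fun ⟨a', ha', hpa⟩ => hpa ▸ (hmem a').mp ha', fun hb => ⟨a, (hmem a).mpr hb, rfl⟩⟩
  · have := hK.map p hp
    exact Group.isSolvable_of_surjective
      (QuotientGroup.map_surjective_of_surjective _ _ p (QuotientGroup.mk_surjective.comp hp)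
        (Subgroup.le_comap_map p K))

def extendByZero {G : Type} [Group G] (U : Subgroup G) (φ : U → ℂ) (g : G) : ℂ :=
  if h : g ∈ U then φ ⟨g, h⟩ else 0

theorem extendByZero_one {G : Type} [Group G] (U : Subgroup G) (φ : U → ℂ) :
    extendByZero U φ 1 = φ 1 :=
  dif_pos U.one_mem

theorem inducedChar_eq_sum {G : Type} [Group G] [Fintype G] (U : Subgroup G) (φ : U → ℂ)
    (g : G) : inducedChar U φ g = (Nat.card U : ℂ)⁻¹ * ∑ y, extendByZero U φ (y⁻¹ * g * y) := by
  rw [inducedChar, finsum_eq_sum_of_fintype]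
  rfl

theorem inducedChar_one {G : Type} [Group G] [Fintype G] (U : Subgroup G) (φ : U → ℂ) :
    inducedChar U φ 1 = (Nat.card U : ℂ)⁻¹ * (Nat.card G * φ 1) := by
  simp only [inducedChar_eq_sum, mul_one, inv_mul_cancel, extendByZero_one, Finset.sum_const,
    Finset.card_univ, nsmul_eq_mul, Nat.card_eq_fintype_card]

theorem extendByZero_comp_subgroupMap {G H : Type} [Group G] [Group H] (f : G →* H)
    {U : Subgroup G} (hU : f.ker ≤ U) (ψ : U.map f → ℂ) (g : G) :
    extendByZero U (ψ ∘ f.subgroupMap U) g = extendByZero (U.map f) ψ (f g) := by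
  have hmem : f g ∈ U.map f ↔ g ∈ U := by
    rw [← Subgroup.mem_comap, Subgroup.comap_map_eq_self hU]
  by_cases hg : g ∈ U
  · rw [extendByZero, extendByZero, dif_pos hg, dif_pos (hmem.mpr hg)]
    rfl
  · rw [extendByZero, extendByZero, dif_neg hg, dif_neg (mt hmem.mp hg)]

theorem inducedChar_comp_subgroupMap {G H : Type} [Group G] [Fintype G] [Group H] [Fintype H]
    {f : G →* H} (hf : Function.Surjective f) {U : Subgroup G} (hU : f.ker ≤ U)
    (ψ : U.map f → ℂ) (g : G) :
    inducedChar U (ψ ∘ f.subgroupMap U) g = inducedChar (U.map f) ψ (f g) := by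
  rw [inducedChar_eq_sum, inducedChar_eq_sum]
  simp only [extendByZero_comp_subgroupMap f hU, map_mul, map_inv]
  rw [f.sum_comp_of_surjective hf (fun q => extendByZero (U.map f) ψ (q⁻¹ * f g * q)),
    Subgroup.card_eq_card_map_mul_card_ker f hU, nsmul_eq_mul, Nat.cast_mul, mul_inv, mul_assoc,
    inv_mul_cancel_left₀ (Nat.cast_ne_zero.mpr Nat.card_pos.ne')]

theorem sum_extendByZero_eq_sum_subgroupOf {G : Type} [Group G] [Fintype G] (N U : Subgroup G)
    (φ : U → ℂ) : ∑ n : N, extendByZero U φ n = ∑ m : N.subgroupOf U, φ m := by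
  refine (Fintype.sum_of_injective (fun m : N.subgroupOf U => (⟨m, m.2⟩ : N))
    (fun m m' h => Subtype.ext (Subtype.ext (congrArg Subtype.val h :))) _ _ ?_ fun m => ?_).symm
  · intro n hn
    refine dif_neg fun hU => hn ⟨⟨⟨n, hU⟩, n.2⟩, rfl⟩
  · exact (dif_pos (m : U).2 : extendByZero U φ m = φ m).symm

theorem sum_inducedChar_normal {G : Type} [Group G] [Fintype G] (N U : Subgroup G) [N.Normal]
    (φ : U → ℂ) : ∑ n : N, inducedChar U φ n =
      (Nat.card U : ℂ)⁻¹ * (Nat.card G * ∑ n : N, extendByZero U φ n) := by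
  simp only [inducedChar_eq_sum, ← Finset.mul_sum]
  rw [Finset.sum_comm]
  congr 1
  rw [Nat.card_eq_fintype_card, ← nsmul_eq_mul, ← Finset.card_univ, ← Finset.sum_const]
  refine Finset.sum_congr rfl fun y _ => ?_
  exact Fintype.sum_equiv (MulAut.conjNormal y⁻¹).toEquiv _ _ fun n => by simp

theorem card_mul_finrank_eq_of_inducedChar_eq {G : Type} [Group G] [Fintype G]
    {N U : Subgroup G} [N.Normal] (W : FDRep ℂ U)
    (h : ∀ n ∈ N, inducedChar U W.character n = inducedChar U W.character 1) :
    Nat.card N * Module.finrank ℂ W = Nat.card (N.subgroupOf U) *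
      Module.finrank ℂ (Representation.invariants (W.ρ.comp (N.subgroupOf U).subtype)) := by
  have hsum : ∑ n : N, inducedChar U W.character n = Nat.card N * inducedChar U W.character 1 := by
    rw [Finset.sum_congr rfl fun n _ => h _ n.2, Finset.sum_const, Finset.card_univ,
      nsmul_eq_mul, Nat.card_eq_fintype_card]
  rw [sum_inducedChar_normal, inducedChar_one, sum_extendByZero_eq_sum_subgroupOf] at hsum
  have hGU : (Nat.card U : ℂ)⁻¹ * Nat.card G ≠ 0 := by simp
  have hM : ∑ m : N.subgroupOf U, W.character m = Nat.card N * W.character 1 :=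
    mul_left_cancel₀ hGU (by linear_combination hsum)
  rw [FDRep.char_one] at hM
  exact_mod_cast hM.symm.trans
    (FDRep.of (W.ρ.comp (N.subgroupOf U).subtype)).sum_character_eq_card_mul_finrank_invariants

theorem le_and_subgroupOf_le_ker_of_inducedChar_eq {G : Type} [Group G] [Fintype G]
    {N U : Subgroup G} [N.Normal] (W : FDRep ℂ U) [Nontrivial W]
    (h : ∀ n ∈ N, inducedChar U W.character n = inducedChar U W.character 1) :
    N ≤ U ∧ N.subgroupOf U ≤ W.ρ.ker := by
  set M := N.subgroupOf U
  set I := Representation.invariants (W.ρ.comp M.subtype)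
  have key : Nat.card N * Module.finrank ℂ W = Nat.card M * Module.finrank ℂ I :=
    card_mul_finrank_eq_of_inducedChar_eq W h
  have hI : Module.finrank ℂ I ≤ Module.finrank ℂ W := Submodule.finrank_le I
  have hMN : Nat.card M ≤ Nat.card N := by
    rw [Subgroup.card_subgroupOf]
    exact Subgroup.card_le_of_le inf_le_left
  have hcard : Nat.card M = Nat.card N := by
    refine le_antisymm hMN (Nat.le_of_mul_le_mul_right ?_ (Module.finrank_pos (R := ℂ) (M := W)))
    exact key ▸ Nat.mul_le_mul_left _ hI
  have hfinrank : Module.finrank ℂ I = Module.finrank ℂ W :=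
    Nat.eq_of_mul_eq_mul_left Nat.card_pos (hcard ▸ key).symm
  constructor
  · refine inf_eq_left.mp (Subgroup.eq_of_le_of_card_ge inf_le_left ?_)
    rw [← Subgroup.card_subgroupOf, hcard]
  · intro m hm
    have hI_top : I = ⊤ := Submodule.eq_top_of_finrank_eq hfinrank
    refine LinearMap.ext fun v => ?_
    exact (Representation.mem_invariants _ v).mp (hI_top ▸ Submodule.mem_top) ⟨m, hm⟩

/-- If `G` is a finite QSI group and `N ⊴ G`, then `G/N` is QSI. -/
theorem isQSIGroup_quotient (G : Type) [Group G] [Finite G]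
    (N : Subgroup G) [N.Normal] (hG : IsQSIGroup G) :
    IsQSIGroup (G ⧸ N) := by
  have := Fintype.ofFinite G
  rintro _ ⟨V, hV, rfl⟩
  set π := QuotientGroup.mk' N
  have hπ : Function.Surjective π := QuotientGroup.mk'_surjective N
  let V' : FDRep ℂ G := FDRep.of (V.ρ.comp π)
  have hV' : Simple V' :=
    (FDRep.simple_iff_of_character_eq_comp π hπ fun _ => rfl).mpr hV
  obtain ⟨U, _, ⟨W, hW, rfl⟩, ⟨k, hk, hind⟩, hsolv⟩ := hG V'.character ⟨V', hV', rfl⟩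
  have hconst : ∀ n ∈ N, inducedChar U W.character n = inducedChar U W.character 1 := by
    intro n hn
    have hπn : π n = π 1 := by rw [map_one]; exact (QuotientGroup.eq_one_iff n).mpr hn
    rw [← hind, ← hind]
    exact congrArg (fun x => (k : ℂ) * V.character x) hπn
  have := FDRep.nontrivial_of_simple W
  obtain ⟨hNU, hNW⟩ := le_and_subgroupOf_le_ker_of_inducedChar_eq W hconst
  have hπU : Function.Surjective (π.subgroupMap U) := π.subgroupMap_surjective U
  obtain ⟨W', hW'⟩ := FDRep.exists_character_eq_comp (π.subgroupMap U) hπU W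
    (by rw [Subgroup.ker_subgroupMap, QuotientGroup.ker_mk']; exact hNW)
  have hφ : W.character = W'.character ∘ π.subgroupMap U := funext hW'
  have hW'simple : Simple W' := (FDRep.simple_iff_of_character_eq_comp _ hπU hW').mp hW
  refine ⟨U.map π, W'.character, ⟨W', hW'simple, rfl⟩, ⟨k, hk, fun x => ?_⟩,
    HasSolvableKerQuotient.of_comp hπU (hφ ▸ hsolv)⟩
  obtain ⟨g, rfl⟩ := hπ x
  rw [← inducedChar_comp_subgroupMap hπ (by rw [QuotientGroup.ker_mk']; exact hNU), ← hφ]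
  exact hind g
end
end

section
/- (Zsigmondy) Let d, n ∈ ℕ with d ≥ 2 and n ≥ 2. Then d^n − 1 has a primitive prime divisor, i.e. a prime p dividing d^n − 1 but dividing none of d^k − 1 for 1 ≤ k < n, except in the following cases: (d, n) = (2, 6), or n = 2 and d is a Mersenne prime (i.e. d + 1 is a power of 2). -/
open scoped BigOperators Classical

noncomputable section

/-!
Modulo a prime `p`, `p ∣ d^k - 1` iff the order of `d` divides `k`, so a primitive prime
divisor of `d^n - 1` is a prime modulo which `d` has order exactly `n`. Modulo a prime
`p ∣ Φ_n(d)`, the order of `d` is the `p`-free part of `n`, and it divides `p - 1`. So if no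
prime gives order `n`, every prime factor of `Φ_n(d)` divides `n` and is the largest prime
factor of `n`: `Φ_n(d)` is a power of one prime `q ∣ n`. For `n ≥ 3` it is not divisible by
`q²`, since it divides `1 + y + ⋯ + y^(q-1)` with `y = d^(n/q) ≡ 1 mod q`. Thus `Φ_n(d) = q`,
which is too small: for `d ≥ 3`, `Φ_n(d) > (d-1)^φ(n) ≥ 2^(q-1)`; for `d = 2`,
`(2^q - 1)^φ(n/q) ≤ Φ_(n/q)(2^q) ≤ Φ_n(2) Φ_(n/q)(2) ≤ q 3^φ(n/q)` forces `q = 3`, `n = 6`.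
For `n = 2`, any odd prime factor of `d + 1` is primitive.
-/

open Polynomial Finset

theorem dvd_pow_sub_one_iff_orderOf_dvd {p d : ℕ} (k : ℕ) (hd : 0 < d) :
    p ∣ d ^ k - 1 ↔ orderOf (d : ZMod p) ∣ k := by
  rw [orderOf_dvd_iff_pow_eq_one, ← Nat.modEq_iff_dvd' (Nat.one_le_pow _ _ hd),
    ← ZMod.natCast_eq_natCast_iff, Nat.cast_one, Nat.cast_pow, eq_comm]

theorem exists_prime_orderOf_eq_two {d : ℕ} (h : ¬ ∃ j, d + 1 = 2 ^ j) :
    ∃ p : ℕ, p.Prime ∧ orderOf (d : ZMod p) = 2 := by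
  obtain ⟨p, hp, hpd, hodd⟩ :=
    (Nat.eq_two_pow_or_exists_odd_prime_and_dvd (d + 1)).resolve_left h
  have hd : (d : ZMod p) = -1 := by
    rw [eq_neg_iff_add_eq_zero]
    exact_mod_cast (ZMod.natCast_eq_zero_iff _ _).2 hpd
  have : Fact p.Prime := ⟨hp⟩
  refine ⟨p, hp, ?_⟩
  rw [hd, orderOf_neg_one, ZMod.ringChar_zmod_n, if_neg]
  rintro rfl
  norm_num at hodd

theorem cyclotomic_mul_dvd_geom_sum {R : Type*} [CommRing R] [IsDomain R] {m k : ℕ}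
    (hm : 0 < m) (hk : 1 < k) : cyclotomic (m * k) R ∣ ∑ i ∈ range k, (X ^ m) ^ i := by
  have hprop : m ∈ (m * k).properDivisors :=
    Nat.mem_properDivisors.2 ⟨dvd_mul_right m k, lt_mul_right hm hk⟩
  have h := X_pow_sub_one_mul_cyclotomic_dvd_X_pow_sub_one_of_dvd R hprop
  rwa [pow_mul, ← mul_geom_sum (X ^ m) k, mul_dvd_mul_iff_left] at h
  simpa using X_pow_sub_C_ne_zero hm (1 : R)

theorem Int.four_dvd_pow_sub_one {x : ℤ} (hx : Odd x) {m : ℕ} (hm : Even m) :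
    4 ∣ x ^ m - 1 := by
  obtain ⟨j, rfl⟩ := hm
  have := Int.sq_mod_four_eq_one_of_odd (hx.pow (n := j))
  rw [← two_mul, pow_mul']
  omega

theorem sq_not_dvd_geom_sum {p : ℕ} (hp : p.Prime) {x : ℤ} (hx : (p : ℤ) ∣ x - 1)
    (h2 : p = 2 → 4 ∣ x - 1) : ¬ (p : ℤ) ^ 2 ∣ ∑ i ∈ range p, x ^ i := by
  rcases hp.eq_two_or_odd' with rfl | hodd
  · have := h2 rfl
    simp only [sum_range_succ, sum_range_zero, pow_zero, pow_one]
    omega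
  obtain ⟨b, hb⟩ := hx
  have hsum := odd_sq_dvd_geom_sum₂_sub (1 : ℤ) b hodd
  simp only [one_pow, mul_one, ← hb, add_sub_cancel] at hsum
  intro h
  have hpp : (p : ℤ) ^ 2 ∣ (p : ℤ) ^ 1 := by simpa using dvd_sub h hsum
  rw [← Int.natCast_pow, ← Int.natCast_pow, Int.natCast_dvd_natCast,
    Nat.pow_dvd_pow_iff_le_right hp.one_lt] at hpp
  omega

section CyclotomicModP

variable {p n : ℕ} [hp : Fact p.Prime] {x : ℤ}

theorem orderOf_eq_ordCompl_of_dvd_cyclotomic_eval (hn : n ≠ 0)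
    (h : (p : ℤ) ∣ (cyclotomic n ℤ).eval x) : orderOf (x : ZMod p) = ordCompl[p] n := by
  have hroot : (cyclotomic (p ^ n.factorization p * ordCompl[p] n) (ZMod p)).IsRoot x := by
    rw [Nat.ordProj_mul_ordCompl_eq_self, ← map_cyclotomic_int, IsRoot, eval_intCast_map,
      Int.cast_id, eq_intCast, ZMod.intCast_zmod_eq_zero_iff_dvd]
    exact h
  have : NeZero ((ordCompl[p] n : ℕ) : ZMod p) :=
    ⟨by rw [Ne, ZMod.natCast_eq_zero_iff]; exact Nat.not_dvd_ordCompl hp.out hn⟩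
  exact (isRoot_cyclotomic_prime_pow_mul_iff_of_charP.1 hroot).eq_orderOf.symm

theorem ordCompl_dvd_sub_one_of_dvd_cyclotomic_eval (hn : n ≠ 0)
    (h : (p : ℤ) ∣ (cyclotomic n ℤ).eval x) : ordCompl[p] n ∣ p - 1 := by
  have hord := orderOf_eq_ordCompl_of_dvd_cyclotomic_eval hn h
  rw [← hord]
  refine ZMod.orderOf_dvd_card_sub_one fun hx => ?_
  rw [hx, orderOf_zero] at hord
  exact (Nat.ordCompl_pos p hn).ne hord

theorem le_of_dvd_cyclotomic_eval {r : ℕ} (hn : n ≠ 0) (h : (p : ℤ) ∣ (cyclotomic n ℤ).eval x)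
    (hr : r.Prime) (hrn : r ∣ n) : r ≤ p := by
  rcases eq_or_ne r p with rfl | hrp
  · rfl
  have hcop : r.Coprime (p ^ n.factorization p) :=
    ((Nat.coprime_primes hr hp.out).2 hrp).pow_right _
  rw [← Nat.ordProj_mul_ordCompl_eq_self n p] at hrn
  have := Nat.le_of_dvd (by have := hp.out.two_le; omega)
    ((hcop.dvd_of_dvd_mul_left hrn).trans (ordCompl_dvd_sub_one_of_dvd_cyclotomic_eval hn h))
  omega

theorem dvd_of_dvd_cyclotomic_eval_of_orderOf_ne (hn : n ≠ 0)
    (h : (p : ℤ) ∣ (cyclotomic n ℤ).eval x) (hne : orderOf (x : ZMod p) ≠ n) : p ∣ n := by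
  rw [orderOf_eq_ordCompl_of_dvd_cyclotomic_eval hn h, Ne,
    Nat.ordCompl_eq_self_iff_zero_or_not_dvd n hp.out] at hne
  tauto

theorem sq_not_dvd_cyclotomic_eval (hn : 3 ≤ n) (hpn : p ∣ n)
    (h : (p : ℤ) ∣ (cyclotomic n ℤ).eval x) : ¬ (p : ℤ) ^ 2 ∣ (cyclotomic n ℤ).eval x := by
  obtain ⟨m, rfl⟩ := hpn
  have hm : 0 < m := Nat.pos_of_ne_zero (by rintro rfl; simp at hn)
  have hcompl : ordCompl[p] (p * m) = ordCompl[p] m := by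
    simpa using Nat.ordCompl_self_pow_mul m 1 hp.out
  have hxm : (p : ℤ) ∣ x ^ m - 1 := by
    have hord := orderOf_eq_ordCompl_of_dvd_cyclotomic_eval (by omega) h
    rw [hcompl] at hord
    rw [← ZMod.intCast_zmod_eq_zero_iff_dvd, Int.cast_sub, Int.cast_pow, Int.cast_one,
      orderOf_dvd_iff_pow_eq_one.1 (hord ▸ Nat.ordCompl_dvd m p), sub_self]
  have hgeom : (cyclotomic (p * m) ℤ).eval x ∣ ∑ i ∈ range p, (x ^ m) ^ i := by
    simpa [mul_comm m, eval_finsetSum] using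
      eval_dvd (x := x) (cyclotomic_mul_dvd_geom_sum hm hp.out.one_lt)
  refine fun hsq => sq_not_dvd_geom_sum hp.out hxm ?_ (hsq.trans hgeom)
  -- For `p = 2`, `ordCompl[2] n ∣ 1` makes `n ≥ 3` a power of two, so `m` is even.
  rintro rfl
  have hmeven : Even m := by
    by_contra hodd
    have hm1 := ordCompl_dvd_sub_one_of_dvd_cyclotomic_eval (by omega) h
    rw [hcompl, (Nat.ordCompl_eq_self_iff_zero_or_not_dvd m Nat.prime_two).2
      (Or.inr (by rwa [← even_iff_two_dvd]))] at hm1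
    simp only [Nat.add_one_sub_one, Nat.dvd_one] at hm1
    omega
  have hxodd : Odd x := by
    obtain ⟨c, hc⟩ := hxm
    push_cast at hc
    exact (Int.odd_pow.1 ⟨c, by linarith⟩).resolve_right hm.ne'
  exact Int.four_dvd_pow_sub_one hxodd hmeven

end CyclotomicModP

theorem exists_prime_eq_cyclotomic_eval {n : ℕ} {x : ℤ} (hn : 3 ≤ n)
    (hΦ : 1 < (cyclotomic n ℤ).eval x) (h : ∀ p : ℕ, p.Prime → orderOf (x : ZMod p) ≠ n) :
    ∃ q : ℕ, q.Prime ∧ q ∣ n ∧ (cyclotomic n ℤ).eval x = q := by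
  obtain ⟨N, hN⟩ := Int.eq_ofNat_of_zero_le (by omega : 0 ≤ (cyclotomic n ℤ).eval x)
  rw [hN] at hΦ ⊢
  have hN1 : 1 < N := by exact_mod_cast hΦ
  have hdvd {r : ℕ} (hr : r.Prime) (hrN : r ∣ N) : (r : ℤ) ∣ (cyclotomic n ℤ).eval x :=
    hN ▸ Int.natCast_dvd_natCast.2 hrN
  have hdvd_n {r : ℕ} (hr : r.Prime) (hrN : r ∣ N) : r ∣ n :=
    haveI := Fact.mk hr
    dvd_of_dvd_cyclotomic_eval_of_orderOf_ne (by omega) (hdvd hr hrN) (h r hr)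
  set q := N.minFac
  have hq : q.Prime := Nat.minFac_prime hN1.ne'
  have : Fact q.Prime := ⟨hq⟩
  have huniq {r : ℕ} (hr : r.Prime) (hrN : r ∣ N) : r = q :=
    haveI := Fact.mk hr
    le_antisymm (le_of_dvd_cyclotomic_eval (by omega) (hdvd hq N.minFac_dvd) hr (hdvd_n hr hrN))
      (le_of_dvd_cyclotomic_eval (by omega) (hdvd hr hrN) hq (hdvd_n hq N.minFac_dvd))
  obtain ⟨c, hc⟩ : ∃ c, N = q ^ c := ⟨_, Nat.eq_prime_pow_of_unique_prime_dvd (by omega) huniq⟩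
  have hc2 : c < 2 := by
    by_contra! hc2
    refine sq_not_dvd_cyclotomic_eval hn (hdvd_n hq N.minFac_dvd) (hdvd hq N.minFac_dvd) ?_
    rw [hN, hc]
    exact_mod_cast pow_dvd_pow q hc2
  interval_cases c
  · rw [pow_zero] at hc
    omega
  · exact ⟨q, hq, hdvd_n hq N.minFac_dvd, by rw [hc, pow_one]⟩

theorem Int.cast_cyclotomic_eval (R : Type*) [Ring R] (n : ℕ) (x : ℤ) :
    (((cyclotomic n ℤ).eval x : ℤ) : R) = (cyclotomic n R).eval (x : R) := by
  simpa using (cyclotomic.eval_apply x n (Int.castRingHom R)).symm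

theorem Int.sub_one_pow_totient_lt_cyclotomic_eval {n : ℕ} {x : ℤ} (hn : 2 ≤ n) (hx : 1 < x) :
    (x - 1) ^ n.totient < (cyclotomic n ℤ).eval x := by
  have hx' : (1 : ℝ) < x := by exact_mod_cast hx
  have := Polynomial.sub_one_pow_totient_lt_cyclotomic_eval hn hx'
  rw [← Int.cast_cyclotomic_eval] at this
  exact_mod_cast this

theorem Int.sub_one_pow_totient_le_cyclotomic_eval {x : ℤ} (hx : 1 < x) (n : ℕ) :
    (x - 1) ^ n.totient ≤ (cyclotomic n ℤ).eval x := by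
  have hx' : (1 : ℝ) < x := by exact_mod_cast hx
  have := Polynomial.sub_one_pow_totient_le_cyclotomic_eval hx' n
  rw [← Int.cast_cyclotomic_eval] at this
  exact_mod_cast this

theorem Int.cyclotomic_eval_le_add_one_pow_totient {x : ℤ} (hx : 1 < x) (n : ℕ) :
    (cyclotomic n ℤ).eval x ≤ (x + 1) ^ n.totient := by
  have hx' : (1 : ℝ) < x := by exact_mod_cast hx
  have := Polynomial.cyclotomic_eval_le_add_one_pow_totient hx' n
  rw [← Int.cast_cyclotomic_eval] at this
  exact_mod_cast this

theorem prime_lt_cyclotomic_eval {q n : ℕ} (hq : q.Prime) (hn : n ≠ 0) (hqn : q ∣ n) {x : ℤ}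
    (hx : 3 ≤ x) : (q : ℤ) < (cyclotomic n ℤ).eval x := by
  have htot : q - 1 ≤ n.totient :=
    Nat.le_of_dvd (Nat.totient_pos.2 (Nat.pos_of_ne_zero hn))
      (Nat.totient_prime hq ▸ Nat.totient_dvd_of_dvd hqn)
  have hq2 : q ≤ 2 ^ (q - 1) := by have := Nat.lt_two_pow_self (n := q - 1); omega
  calc (q : ℤ) ≤ 2 ^ (q - 1) := by exact_mod_cast hq2
    _ ≤ 2 ^ n.totient := pow_le_pow_right₀ (by norm_num) htot
    _ ≤ (x - 1) ^ n.totient := pow_le_pow_left₀ (by norm_num) (by omega) _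
    _ < (cyclotomic n ℤ).eval x :=
      Int.sub_one_pow_totient_lt_cyclotomic_eval
        (hq.two_le.trans (Nat.le_of_dvd (Nat.pos_of_ne_zero hn) hqn)) (by omega)

theorem cyclotomic_eval_pow_le_mul {p m : ℕ} (hp : p.Prime) {x : ℤ} (hx : 1 < x) :
    (cyclotomic m ℤ).eval (x ^ p) ≤
      (cyclotomic (m * p) ℤ).eval x * (cyclotomic m ℤ).eval x := by
  rw [← expand_eval]
  by_cases hpm : p ∣ m
  · rw [cyclotomic_expand_eq_cyclotomic hp hpm]
    exact le_mul_of_one_le_right (cyclotomic_pos' _ hx).le (cyclotomic_pos' _ hx)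
  · rw [cyclotomic_expand_eq_cyclotomic_mul hp hpm, eval_mul]

theorem pow_le_mul_pow_of_le_of_pow_le_mul_pow {R : Type*} [CommSemiring R] [LinearOrder R]
    [IsStrictOrderedRing R] {a b c : R} {s t : ℕ} (hb : 0 < b) (hba : b ≤ a) (hst : s ≤ t)
    (h : a ^ t ≤ c * b ^ t) : a ^ s ≤ c * b ^ s := by
  obtain ⟨u, rfl⟩ := Nat.exists_eq_add_of_le hst
  refine le_of_mul_le_mul_right ?_ (pow_pos hb u)
  calc a ^ s * b ^ u ≤ a ^ s * a ^ u :=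
        mul_le_mul_of_nonneg_left (pow_le_pow_left₀ hb.le hba u) (pow_nonneg (hb.le.trans hba) s)
    _ ≤ c * b ^ (s + u) := by rwa [← pow_add]
    _ = c * b ^ s * b ^ u := by rw [pow_add, mul_assoc]

theorem three_mul_add_one_lt_two_pow {q : ℕ} (hq : 4 ≤ q) : 3 * q + 1 < 2 ^ q := by
  induction q, hq using Nat.le_induction with
  | base => norm_num
  | succ q hq ih => rw [pow_succ]; omega

theorem eq_three_of_two_pow_sub_one_pow_le {q t : ℕ} (hq : 3 ≤ q) (ht : 1 ≤ t)
    (h : ((2 : ℤ) ^ q - 1) ^ t ≤ q * 3 ^ t) : q = 3 ∧ t = 1 := by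
  have h8 : (8 : ℤ) ≤ 2 ^ q := by
    calc (8 : ℤ) = 2 ^ 3 := by norm_num
      _ ≤ 2 ^ q := pow_le_pow_right₀ (by norm_num) hq
  have hle {s : ℕ} (hs : s ≤ t) : ((2 : ℤ) ^ q - 1) ^ s ≤ q * 3 ^ s :=
    pow_le_mul_pow_of_le_of_pow_le_mul_pow (by norm_num) (by linarith) hs h
  have hq3 : q = 3 := by
    by_contra hq3
    have := three_mul_add_one_lt_two_pow (by omega : 4 ≤ q)
    have := hle ht
    have : ((2 ^ q : ℕ) : ℤ) ≤ 3 * q + 1 := by push_cast; linarith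
    omega
  subst hq3
  refine ⟨rfl, by_contra fun ht1 => ?_⟩
  have := hle (by omega : 2 ≤ t)
  norm_num at this

theorem eq_six_of_cyclotomic_eval_two_eq_prime {q n : ℕ} (hq : q.Prime) (hn : n ≠ 0)
    (hqn : q ∣ n) (hΦ : (cyclotomic n ℤ).eval 2 = q) : n = 6 := by
  have : Fact q.Prime := ⟨hq⟩
  have hdvd : (q : ℤ) ∣ (cyclotomic n ℤ).eval 2 := hΦ ▸ dvd_rfl
  set m := ordCompl[q] n
  have hm1 : m ∣ q - 1 := ordCompl_dvd_sub_one_of_dvd_cyclotomic_eval hn hdvd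
  have hm2 : 2 ≤ m := by
    have hord : orderOf (2 : ZMod q) = m := by
      simpa using orderOf_eq_ordCompl_of_dvd_cyclotomic_eval (x := 2) hn hdvd
    have : m ≠ 1 := fun hm => by
      rw [hm, orderOf_eq_one_iff] at hord
      have : ((1 : ℕ) : ZMod q) = 0 := by push_cast; linear_combination hord
      exact hq.not_dvd_one ((ZMod.natCast_eq_zero_iff 1 q).1 this)
    have := Nat.ordCompl_pos q hn
    omega
  have hq3 : 3 ≤ q := by have := Nat.le_of_dvd (by have := hq.two_le; omega) hm1; omega
  obtain ⟨k, rfl⟩ := hqn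
  have hk : k ≠ 0 := by rintro rfl; simp at hn
  have hchain : ((2 : ℤ) ^ q - 1) ^ k.totient ≤ q * 3 ^ k.totient :=
    calc ((2 : ℤ) ^ q - 1) ^ k.totient ≤ (cyclotomic k ℤ).eval (2 ^ q) :=
          Int.sub_one_pow_totient_le_cyclotomic_eval (one_lt_pow₀ one_lt_two (by omega)) k
      _ ≤ (cyclotomic (k * q) ℤ).eval 2 * (cyclotomic k ℤ).eval 2 :=
          cyclotomic_eval_pow_le_mul hq one_lt_two
      _ ≤ q * 3 ^ k.totient := by
          rw [mul_comm k, hΦ]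
          exact mul_le_mul_of_nonneg_left
            (Int.cyclotomic_eval_le_add_one_pow_totient one_lt_two k) (by positivity)
  obtain ⟨rfl, ht⟩ :=
    eq_three_of_two_pow_sub_one_pow_le hq3 (Nat.totient_pos.2 (by omega)) hchain
  rcases Nat.totient_eq_one_iff.1 ht with rfl | rfl
  · have : m ∣ 1 := by simpa using Nat.dvd_gcd (Nat.ordCompl_dvd 3 3) hm1
    have := Nat.le_of_dvd one_pos this
    omega
  · rfl

/-- **Zsigmondy's theorem.** For `d, n ≥ 2`, the number `d^n - 1` has a primitive prime
divisor (a prime dividing `d^n - 1` but no `d^k - 1` for `1 ≤ k < n`), except when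
`(d, n) = (2, 6)` or `n = 2` and `d` is a Mersenne prime (i.e. `d + 1` is a power of `2`). -/
theorem zsigmondy (d n : ℕ) (hd : 2 ≤ d) (hn : 2 ≤ n)
    (h1 : ¬ (d = 2 ∧ n = 6)) (h2 : ¬ (n = 2 ∧ ∃ j : ℕ, d + 1 = 2 ^ j)) :
    ∃ p : ℕ, p.Prime ∧ p ∣ d ^ n - 1 ∧
      ∀ k : ℕ, 1 ≤ k → k < n → ¬ p ∣ d ^ k - 1 := by
  suffices ∃ p : ℕ, p.Prime ∧ orderOf (d : ZMod p) = n by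
    obtain ⟨p, hp, hord⟩ := this
    have hdvd (k : ℕ) := dvd_pow_sub_one_iff_orderOf_dvd (p := p) k (by omega : 0 < d)
    refine ⟨p, hp, (hdvd n).2 hord.dvd, fun k hk hkn hpk => ?_⟩
    exact hkn.not_ge (Nat.le_of_dvd hk (hord ▸ (hdvd k).1 hpk))
  rcases hn.eq_or_lt with rfl | hn3
  · exact exists_prime_orderOf_eq_two fun hpow => h2 ⟨rfl, hpow⟩
  by_contra! hno
  have hx : (1 : ℤ) < d := by exact_mod_cast hd
  have hΦ : 1 < (cyclotomic n ℤ).eval (d : ℤ) :=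
    (one_le_pow₀ (by omega)).trans_lt (Int.sub_one_pow_totient_lt_cyclotomic_eval (by omega) hx)
  obtain ⟨q, hq, hqn, hΦq⟩ := exists_prime_eq_cyclotomic_eval hn3 hΦ (by simpa using hno)
  rcases hd.eq_or_lt with rfl | hd3
  · exact h1 ⟨rfl, eq_six_of_cyclotomic_eval_two_eq_prime hq (by omega) hqn hΦq⟩
  · exact (prime_lt_cyclotomic_eval hq (by omega) hqn (by omega)).ne' hΦq
end
end

section
/- Let q be a prime power, n ≥ 2, and let p be a primitive prime divisor of q^n − 1 (i.e. p divides q^n − 1 but p does not divide q^k − 1 for 1 ≤ k < n). If g ∈ GL_n(𝔽_q) is an element whose order is divisible by p, then g acts irreducibly on V = (𝔽_q)^n, i.e. the only g-invariant subspaces of V are 0 and V. -/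
open scoped BigOperators Classical

noncomputable section

/-!
If `p ∣ orderOf g`, some power `f` of `g` has order exactly `p`. Suppose `f` stabilises a
subspace `W` with `0 < k = dim W < n`. The maps induced by `f` on `W` and on `V ⧸ W` have `p`-th
power `1`; if both were trivial, `f - 1` would square to zero, so `1 = f ^ p = 1 + p (f - 1)`,
and `f = 1` because `p` is not the characteristic. Hence `p` divides `|GL_k(𝔽_q)|` or
`|GL_(n-k)(𝔽_q)|`, i.e. `p ∣ q ^ j - 1` for some `1 ≤ j < n`, against primitivity.
-/

open Module

theorem not_dvd_of_dvd_pow_sub_one {p q n : ℕ} (hp : p ≠ 1) (hq : 0 < q) (hn : n ≠ 0)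
    (h : p ∣ q ^ n - 1) : ¬ p ∣ q := by
  intro hpq
  have hpqn : p ∣ q ^ n := dvd_pow hpq hn
  exact hp (Nat.dvd_one.1 ((Nat.dvd_sub_iff_right (Nat.one_le_pow _ _ hq) hpqn).1 h))

theorem natCast_ne_zero_of_dvd_card_pow_sub_one {F : Type*} [Field F] [Fintype F] {p n : ℕ}
    (hn : n ≠ 0) (h : p ∣ Fintype.card F ^ n - 1) : (p : F) ≠ 0 := by
  intro hp
  obtain ⟨m, hm⟩ := h
  -- `q = 0` in `F`, so `q ^ n - 1` is sent to `-1`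
  have hcast := congrArg (Nat.cast : ℕ → F) hm
  rw [Nat.cast_sub (Nat.one_le_pow _ _ Fintype.card_pos), Nat.cast_pow,
    FiniteField.cast_card_eq_zero, zero_pow hn, Nat.cast_mul, hp, zero_mul] at hcast
  simp at hcast

theorem exists_dvd_card_pow_sub_one_of_dvd_card_GL {F : Type*} [Field F] [Fintype F] {p k : ℕ}
    (hp : p.Prime) (hpq : ¬ p ∣ Fintype.card F) (h : p ∣ Nat.card (GL (Fin k) F)) :
    ∃ j, 1 ≤ j ∧ j ≤ k ∧ p ∣ Fintype.card F ^ j - 1 := by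
  set q := Fintype.card F
  rw [Matrix.card_GL_field] at h
  obtain ⟨i, -, hi⟩ := hp.prime.exists_mem_finset_dvd h
  have hik : (i : ℕ) < k := i.isLt
  have hfactor : q ^ k - q ^ (i : ℕ) = q ^ (i : ℕ) * (q ^ (k - i) - 1) := by
    rw [Nat.mul_sub, mul_one, ← pow_add, Nat.add_sub_cancel' hik.le]
  rw [hfactor] at hi
  have hpqi : ¬ p ∣ q ^ (i : ℕ) := fun hd => hpq (hp.dvd_of_dvd_pow hd)
  exact ⟨k - i, by omega, by omega, (hp.dvd_mul.1 hi).resolve_left hpqi⟩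

theorem one_add_pow_of_mul_self_eq_zero {R : Type*} [Ring R] {N : R} (hN : N * N = 0) (m : ℕ) :
    (1 + N) ^ m = 1 + m • N := by
  induction m with
  | zero => simp
  | succ m ih =>
    rw [pow_succ, ih, succ_nsmul]
    have : m • N * N = 0 := by rw [smul_mul_assoc, hN, smul_zero]
    rw [mul_add, add_mul, add_mul, this]
    simp only [mul_one, one_mul, add_zero, add_assoc]

theorem eq_one_of_pow_eq_one_of_sub_one_mul_self_eq_zero {F R : Type*} [DivisionRing F] [Ring R]
    [Module F R] {p : ℕ} (hp : (p : F) ≠ 0) {f : R} (hf : f ^ p = 1)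
    (h2 : (f - 1) * (f - 1) = 0) : f = 1 := by
  have hpow := one_add_pow_of_mul_self_eq_zero h2 p
  rw [add_sub_cancel, hf, left_eq_add, ← Nat.cast_smul_eq_nsmul F,
    smul_eq_zero_iff_right hp] at hpow
  exact sub_eq_zero.1 hpow

section FiniteDimensional

variable {F V : Type*} [Field F] [AddCommGroup V] [Module F V] [Module.Finite F V]

theorem orderOf_dvd_card_GL_finrank (u : (Module.End F V)ˣ) :
    orderOf u ∣ Nat.card (GL (Fin (finrank F V)) F) := by
  let e := Units.mapEquiv (algEquivMatrix (Module.finBasis F V)).toMulEquiv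
  rw [← e.orderOf_eq]
  exact orderOf_dvd_natCard _

theorem eq_one_of_pow_eq_one_of_not_dvd_card_GL {p : ℕ} (hp : p.Prime) {f : Module.End F V}
    (hf : f ^ p = 1) (h : ¬ p ∣ Nat.card (GL (Fin (finrank F V)) F)) : f = 1 := by
  let u := Units.ofPowEqOne f p hf hp.ne_zero
  have hu : orderOf u ∣ p := orderOf_dvd_of_pow_eq_one (Units.ext (by simp [u]))
  have hcop := Nat.Coprime.coprime_dvd_left hu (hp.coprime_iff_not_dvd.2 h)
  rw [← orderOf_eq_one_iff, ← Units.val_ofPowEqOne f p hf hp.ne_zero, orderOf_units]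
  exact hcop.eq_one_of_dvd (orderOf_dvd_card_GL_finrank u)

theorem prime_dvd_card_GL_finrank_submodule_or_quotient {p : ℕ} (hp : p.Prime)
    (hpF : (p : F) ≠ 0) {f : Module.End F V} (hf : orderOf f = p) {W : Submodule F V}
    (hW : ∀ x ∈ W, f x ∈ W) :
    p ∣ Nat.card (GL (Fin (finrank F W)) F) ∨ p ∣ Nat.card (GL (Fin (finrank F (V ⧸ W))) F) := by
  have hfp : f ^ p = 1 := hf ▸ pow_orderOf_eq_one f
  by_contra! hndvd
  have hfW : f.restrict hW = 1 := by
    refine eq_one_of_pow_eq_one_of_not_dvd_card_GL hp ?_ hndvd.1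
    rw [Module.End.pow_restrict]
    ext x
    simp [hfp]
  have hfQ : W.mapQ W f hW = 1 := by
    refine eq_one_of_pow_eq_one_of_not_dvd_card_GL hp ?_ hndvd.2
    rw [← Submodule.mapQ_pow]
    ext x
    simp [hfp]
  have hN : (f - 1) * (f - 1) = 0 := by
    refine LinearMap.range_le_ker_iff.1 ?_
    rintro _ ⟨x, rfl⟩
    have hxW : f x - x ∈ W :=
      (Submodule.Quotient.eq W).1 (by simpa using LinearMap.congr_fun hfQ (W.mkQ x))
    simpa [sub_eq_zero, Subtype.ext_iff] using LinearMap.congr_fun hfW ⟨_, hxW⟩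
  have hf1 := eq_one_of_pow_eq_one_of_sub_one_mul_self_eq_zero hpF hfp hN
  rw [hf1, orderOf_one] at hf
  exact hp.ne_one hf.symm

end FiniteDimensional

/-- If `p` is a primitive prime divisor of `q^n - 1` and `g ∈ GL_n(F_q)` has order divisible
by `p`, then `g` acts irreducibly on `V = F_q^n`. -/
theorem irreducible_of_primitive_prime_divisor_dvd_orderOf (F : Type) [Field F] [Fintype F]
    (n : ℕ) (hn : 2 ≤ n) (p : ℕ) (hp : p.Prime)
    (hdvd : p ∣ Fintype.card F ^ n - 1)
    (hprim : ∀ k : ℕ, 1 ≤ k → k < n → ¬ p ∣ Fintype.card F ^ k - 1)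
    (g : LinearMap.GeneralLinearGroup F (Fin n → F)) (hg : p ∣ orderOf g)
    (W : Submodule F (Fin n → F))
    (hW : ∀ x ∈ W, (g : (Fin n → F) →ₗ[F] (Fin n → F)) x ∈ W) :
    W = ⊥ ∨ W = ⊤ := by
  have hn0 : n ≠ 0 := by omega
  have hpF : (p : F) ≠ 0 := natCast_ne_zero_of_dvd_card_pow_sub_one hn0 hdvd
  have hpq : ¬ p ∣ Fintype.card F :=
    not_dvd_of_dvd_pow_sub_one hp.ne_one Fintype.card_pos hn0 hdvd
  have hGL : ∀ k < n, ¬ p ∣ Nat.card (GL (Fin k) F) := fun k hk h => by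
    obtain ⟨j, hj1, hjk, hj⟩ := exists_dvd_card_pow_sub_one_of_dvd_card_GL hp hpq h
    exact hprim j hj1 (by omega) hj
  have hg0 : orderOf g ≠ 0 :=
    ne_zero_of_dvd_ne_zero Nat.card_pos.ne' (orderOf_dvd_card_GL_finrank g)
  set f : Module.End F (Fin n → F) := ↑(g ^ (orderOf g / p))
  have hf : orderOf f = p := by rw [orderOf_units]; exact orderOf_pow_orderOf_div hg0 hg
  have hWf : ∀ x ∈ W, f x ∈ W := by
    simpa [f, Units.val_pow_eq_pow_val] using Module.End.pow_apply_mem_of_forall_mem _ hW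
  by_contra! hproper
  have hWn : finrank F W < n := by simpa using Submodule.finrank_lt hproper.2
  have hWpos : finrank F W ≠ 0 := Submodule.finrank_eq_zero.not.2 hproper.1
  have hQn : finrank F ((Fin n → F) ⧸ W) < n := by
    have := W.finrank_quotient_add_finrank
    rw [finrank_fin_fun] at this
    omega
  rcases prime_dvd_card_GL_finrank_submodule_or_quotient hp hpF hf hWf with h | h
  · exact hGL _ hWn h
  · exact hGL _ hQn h
end
end
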